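/- arXiv:2412.06262 — 2 statements merged into one kernel-verified Lean document; each statement's English description precedes it below -/
import Mathlib

section
/- Suppose f : ℝⁿ → ℝⁿ is Lipschitz with constant L_f < 1, x is constant, and y* is the unique fixed point of y ↦ f(y + g(x)). Then any solution y(t) of ẏ = -y + f(y + g(x)) satisfies ‖y(t) - y*‖ ≤ ‖y(0) - y*‖ e^{-(1-L_f)t}, so y* is a global attractor. -/
/-!
If `F p = p`, the rescaled deviation `eᵗ • (y t - p)` has derivative `eᵗ • (F (y t) - F p)`,
whose norm is at most `K` times its own norm. Grönwall's inequality then bounds it by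
`‖y 0 - p‖ e^{K t}`, and multiplying back by `e^{-t}` gives decay at rate `1 - K`.
-/

open Real

section
variable {E : Type*} [NormedAddCommGroup E] [NormedSpace ℝ E]

theorem hasDerivAt_exp_smul_sub_fixedPoint {F : E → E} {p : E} (hp : F p = p)
    {y : ℝ → E} {t : ℝ} (hy : HasDerivAt y (-y t + F (y t)) t) :
    HasDerivAt (fun s => exp s • (y s - p)) (exp t • (F (y t) - F p)) t := by
  refine ((hasDerivAt_exp t).smul (hy.sub_const p)).congr_deriv ?_
  rw [hp]
  module

theorem norm_sub_fixedPoint_le_of_hasDerivAt {F : E → E} {K : NNReal} (hF : LipschitzWith K F)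
    {p : E} (hp : F p = p) {y : ℝ → E} (hy : ∀ t ≥ 0, HasDerivAt y (-y t + F (y t)) t)
    {T : ℝ} (hT : 0 ≤ T) :
    ‖y T - p‖ ≤ ‖y 0 - p‖ * exp (-(1 - K) * T) := by
  have hderiv (t : ℝ) (ht : 0 ≤ t) := hasDerivAt_exp_smul_sub_fixedPoint hp (hy t ht)
  have hgrowth := norm_le_gronwallBound_of_norm_deriv_right_le (K := K) (ε := 0)
    (fun t ht => (hderiv t ht.1).continuousAt.continuousWithinAt)
    (fun t ht => (hderiv t ht.1).hasDerivWithinAt) le_rfl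
    (fun t _ => by
      rw [norm_smul, norm_smul, add_zero, mul_left_comm]
      exact mul_le_mul_of_nonneg_left (hF.norm_sub_le _ _) (norm_nonneg _))
    T ⟨hT, le_rfl⟩
  rw [gronwallBound_ε0, sub_zero, norm_smul, norm_of_nonneg (exp_pos T).le] at hgrowth
  simp only [exp_zero, one_smul] at hgrowth
  calc ‖y T - p‖ = exp (-T) * (exp T * ‖y T - p‖) := by
        rw [← mul_assoc, ← exp_add, neg_add_cancel, exp_zero, one_mul]
    _ ≤ exp (-T) * (‖y 0 - p‖ * exp (K * T)) := by gcongr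
    _ = ‖y 0 - p‖ * exp (-(1 - K) * T) := by
        rw [mul_left_comm, ← exp_add]
        ring_nf

end

theorem stmt_3_general {n m : ℕ}
    (f : EuclideanSpace ℝ (Fin n) → EuclideanSpace ℝ (Fin n))
    (g : EuclideanSpace ℝ (Fin m) → EuclideanSpace ℝ (Fin n))
    (x : EuclideanSpace ℝ (Fin m))
    (Lf : NNReal) (hf : LipschitzWith Lf f)
    (ystar : EuclideanSpace ℝ (Fin n)) (hstar : ystar = f (ystar + g x))
    (y : ℝ → EuclideanSpace ℝ (Fin n))
    (hy : ∀ t ≥ (0 : ℝ), HasDerivAt y (-y t + f (y t + g x)) t) :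
    ∀ t ≥ (0 : ℝ), ‖y t - ystar‖ ≤ ‖y 0 - ystar‖ * Real.exp (-(1 - (Lf : ℝ)) * t) :=
  fun _ ht => norm_sub_fixedPoint_le_of_hasDerivAt
    (mul_one Lf ▸ hf.comp (isometry_add_right (g x)).lipschitz) hstar.symm hy ht

/-- With constant input and `L_f < 1`, any solution of the nmODE converges exponentially
to the unique fixed point `y*`: `‖y t - y*‖ ≤ ‖y 0 - y*‖ e^{-(1-L_f) t}`. -/
theorem stmt_3 {n m : ℕ}
    (f : EuclideanSpace ℝ (Fin n) → EuclideanSpace ℝ (Fin n))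
    (g : EuclideanSpace ℝ (Fin m) → EuclideanSpace ℝ (Fin n))
    (x : EuclideanSpace ℝ (Fin m))
    (Lf : NNReal) (hLf : Lf < 1) (hf : LipschitzWith Lf f)
    (ystar : EuclideanSpace ℝ (Fin n)) (hstar : ystar = f (ystar + g x))
    (y : ℝ → EuclideanSpace ℝ (Fin n))
    (hy : ∀ t ≥ (0 : ℝ), HasDerivAt y (-y t + f (y t + g x)) t) :
    ∀ t ≥ (0 : ℝ), ‖y t - ystar‖ ≤ ‖y 0 - ystar‖ * Real.exp (-(1 - (Lf : ℝ)) * t) :=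
  stmt_3_general f g x Lf hf ystar hstar y hy
end

section
/- Consider two Euler-discretized nmODE iterations with the same f (Lipschitz constant L_f) and step δ ∈ (0,1] but different input sequences: y_{n+1} = (1-δ)y_n + δ f(y_n + u_n) and z_{n+1} = (1-δ)z_n + δ f(z_n + v_n), with y_0 = z_0. Then ‖y_N - z_N‖ ≤ δ L_f · Σ_{n=0}^{N-1} (1-δ+δL_f)^{N-1-n} ‖u_n - v_n‖. -/
/-- Sensitivity of the Euler-discretized nmODE decoder to input perturbations:
`‖y_N - z_N‖ ≤ δ L_f Σ_{n<N} (1-δ+δL_f)^{N-1-n} ‖uₙ - vₙ‖`. -/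
theorem stmt_13 {n : ℕ}
    (f : EuclideanSpace ℝ (Fin n) → EuclideanSpace ℝ (Fin n))
    (Lf : NNReal) (hf : LipschitzWith Lf f)
    (δ : ℝ) (hδ0 : 0 < δ) (hδ1 : δ ≤ 1)
    (u v : ℕ → EuclideanSpace ℝ (Fin n))
    (y z : ℕ → EuclideanSpace ℝ (Fin n)) (h0 : y 0 = z 0)
    (hy : ∀ k, y (k + 1) = (1 - δ) • y k + δ • f (y k + u k))
    (hz : ∀ k, z (k + 1) = (1 - δ) • z k + δ • f (z k + v k))
    (N : ℕ) :
    ‖y N - z N‖ ≤ δ * (Lf : ℝ) *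
      ∑ k ∈ Finset.range N, (1 - δ + δ * (Lf : ℝ)) ^ (N - 1 - k) * ‖u k - v k‖ := by
  set L : ℝ := (Lf : ℝ) with hL
  have hLnn : 0 ≤ L := Lf.coe_nonneg
  set c : ℝ := 1 - δ + δ * L with hc
  have hcnn : 0 ≤ c := by
    have : 0 ≤ δ * L := mul_nonneg hδ0.le hLnn
    nlinarith
  -- one-step estimate
  have step : ∀ k, ‖y (k+1) - z (k+1)‖ ≤ c * ‖y k - z k‖ + δ * L * ‖u k - v k‖ := by
    intro k
    have hdist : ‖f (y k + u k) - f (z k + v k)‖ ≤ L * ‖(y k + u k) - (z k + v k)‖ := by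
      have := hf.dist_le_mul (y k + u k) (z k + v k)
      simpa [dist_eq_norm] using this
    have h1 : y (k+1) - z (k+1)
        = (1 - δ) • (y k - z k) + δ • (f (y k + u k) - f (z k + v k)) := by
      rw [hy k, hz k]; module
    calc ‖y (k+1) - z (k+1)‖
        ≤ ‖(1 - δ) • (y k - z k)‖ + ‖δ • (f (y k + u k) - f (z k + v k))‖ := by
          rw [h1]; exact norm_add_le _ _
      _ = (1 - δ) * ‖y k - z k‖ + δ * ‖f (y k + u k) - f (z k + v k)‖ := by
          rw [norm_smul, norm_smul, Real.norm_eq_abs, Real.norm_eq_abs,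
            abs_of_nonneg (by linarith), abs_of_nonneg hδ0.le]
      _ ≤ (1 - δ) * ‖y k - z k‖ + δ * (L * ‖(y k + u k) - (z k + v k)‖) := by
          gcongr
      _ ≤ (1 - δ) * ‖y k - z k‖ + δ * (L * (‖y k - z k‖ + ‖u k - v k‖)) := by
          have : ‖(y k + u k) - (z k + v k)‖ ≤ ‖y k - z k‖ + ‖u k - v k‖ := by
            have : (y k + u k) - (z k + v k) = (y k - z k) + (u k - v k) := by abel
            rw [this]; exact norm_add_le _ _
          gcongr
      _ = c * ‖y k - z k‖ + δ * L * ‖u k - v k‖ := by ring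
  induction N with
  | zero => simp [h0]
  | succ N ih =>
    have key : ‖y (N+1) - z (N+1)‖
        ≤ c * (δ * L * ∑ k ∈ Finset.range N, c ^ (N - 1 - k) * ‖u k - v k‖)
          + δ * L * ‖u N - v N‖ := by
      calc ‖y (N+1) - z (N+1)‖ ≤ c * ‖y N - z N‖ + δ * L * ‖u N - v N‖ := step N
        _ ≤ _ := by gcongr
    refine key.trans ?_
    rw [Finset.sum_range_succ]
    have hexp : ∀ k ∈ Finset.range N, c * (c ^ (N - 1 - k)) = c ^ (N + 1 - 1 - k) := by
      intro k hk
      rw [Finset.mem_range] at hk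
      rw [← pow_succ']
      congr 1
      omega
    have hNN : (N + 1 - 1 - N : ℕ) = 0 := by omega
    rw [mul_add, hNN, pow_zero, one_mul]
    have : c * (δ * L * ∑ k ∈ Finset.range N, c ^ (N - 1 - k) * ‖u k - v k‖)
        = δ * L * ∑ k ∈ Finset.range N, c ^ (N + 1 - 1 - k) * ‖u k - v k‖ := by
      simp only [Finset.mul_sum]
      refine Finset.sum_congr rfl fun k hk => ?_
      rw [← hexp k hk]; ring
    linarith
end
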